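/- With the notation of fractional linear compositions: F_1,...,F_n fractional linear with means m_k, S_k = ∑_{j≤k} log m_j, a_n = e^{-S_n}, b_i = ∑_{k=0}^{i-1} e^{-S_k}, one has F_{i,n}(0) = (a_n + b_n - b_{i+1}) / (a_n + b_n - b_i) for all 0 ≤ i ≤ n-1. -/

import Mathlib

/-- The fractional linear (geometric) probability generating function with mean `exp x`. -/
noncomputable def geomPGF (x s : ℝ) : ℝ := (1 + Real.exp x * (1 - s))⁻¹

/-- The associated random walk: `walk X k = log m_1 + ... + log m_k` where `X j = log m_j`. -/
noncomputable def walk (X : ℕ → ℝ) (k : ℕ) : ℝ := ∑ j ∈ Finset.range k, X (j + 1)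

/-- Forward composition `F_{i,n}(s) = F_{i+1}(F_{i+2}(... F_n(s) ...))`, with `F_{n,n}(s) = s`,
where `F_k` is the fractional linear pgf with mean `m_k = exp (X k)`. -/
noncomputable def Fcomp (X : ℕ → ℝ) (i n : ℕ) (s : ℝ) : ℝ :=
  (List.range (n - i)).foldr (fun k t => geomPGF (X (i + k + 1)) t) s

/-- `a_k = e^{-S_k}`. -/
noncomputable def aRW (X : ℕ → ℝ) (k : ℕ) : ℝ := Real.exp (-(walk X k))

/-- `b_m = ∑_{k=0}^{m-1} e^{-S_k}` (so `b_0 = 0`). -/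
noncomputable def bRW (X : ℕ → ℝ) (m : ℕ) : ℝ := ∑ k ∈ Finset.range m, Real.exp (-(walk X k))

/-!
Put `D_j = a_n + b_n - b_j`. Since `b_{j+1} = b_j + a_j`, the claimed value is
`D_{i+1} / D_i = 1 - a_i / D_i`, and it also holds for `i = n`, where `D_{n+1} = 0`.
Downward induction on `i` then only needs `F_{i+1}(1 - a_{i+1} / D_{i+1}) = D_{i+1} / D_i`,
which is `m_{i+1} a_{i+1} = a_i` together with `D_{i+1} + a_i = D_i`.
-/

lemma walk_succ (X : ℕ → ℝ) (k : ℕ) : walk X (k + 1) = walk X k + X (k + 1) :=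
  Finset.sum_range_succ _ _

lemma exp_mul_aRW_succ (X : ℕ → ℝ) (k : ℕ) :
    Real.exp (X (k + 1)) * aRW X (k + 1) = aRW X k := by
  rw [aRW, aRW, ← Real.exp_add, walk_succ]
  ring_nf

lemma bRW_succ (X : ℕ → ℝ) (m : ℕ) : bRW X (m + 1) = bRW X m + aRW X m :=
  Finset.sum_range_succ _ _

lemma geomPGF_sub_div {v : ℝ} (hv : v ≠ 0) (x c : ℝ) :
    geomPGF x ((v - c) / v) = v / (v + Real.exp x * c) := by
  rw [geomPGF, ← inv_div]
  field_simp
  ring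

lemma Fcomp_self (X : ℕ → ℝ) (n : ℕ) (s : ℝ) : Fcomp X n n s = s := by
  simp [Fcomp]

lemma Fcomp_eq_geomPGF_Fcomp (X : ℕ → ℝ) {i n : ℕ} (h : i < n) (s : ℝ) :
    Fcomp X i n s = geomPGF (X (i + 1)) (Fcomp X (i + 1) n s) := by
  have hlen : n - i = n - (i + 1) + 1 := by omega
  have hidx (k : ℕ) : i + (k + 1) + 1 = i + 1 + k + 1 := by omega
  simp [Fcomp, hlen, List.range_succ_eq_map, List.foldr_map, hidx]

lemma bRW_mono (X : ℕ → ℝ) : Monotone (bRW X) := fun _ _ h =>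
  Finset.sum_le_sum_of_subset_of_nonneg (Finset.range_subset_range.2 h)
    fun _ _ _ => (Real.exp_pos _).le

lemma aRW_add_bRW_sub_bRW_pos (X : ℕ → ℝ) {j n : ℕ} (h : j ≤ n) :
    0 < aRW X n + bRW X n - bRW X j := by
  have ha : 0 < aRW X n := Real.exp_pos _
  linarith [bRW_mono X h]

theorem Fcomp_zero_eq_of_le (X : ℕ → ℝ) {i n : ℕ} (h : i ≤ n) :
    Fcomp X i n 0 =
      (aRW X n + bRW X n - bRW X (i + 1)) / (aRW X n + bRW X n - bRW X i) := by
  induction h using Nat.decreasingInduction with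
  | self =>
    rw [Fcomp_self, bRW_succ, add_comm (bRW X n), sub_self, zero_div]
  | of_succ i hi ih =>
    have hD : aRW X n + bRW X n - bRW X (i + 1) ≠ 0 := (aRW_add_bRW_sub_bRW_pos X hi).ne'
    have hnum : aRW X n + bRW X n - bRW X (i + 1 + 1) =
        aRW X n + bRW X n - bRW X (i + 1) - aRW X (i + 1) := by
      rw [bRW_succ X (i + 1)]; ring
    have hden : aRW X n + bRW X n - bRW X (i + 1) + aRW X i =
        aRW X n + bRW X n - bRW X i := by
      rw [bRW_succ]; ring
    rw [Fcomp_eq_geomPGF_Fcomp X hi, ih, hnum, geomPGF_sub_div hD, exp_mul_aRW_succ, hden]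

/-- `F_{i,n}(0) = (a_n + b_n - b_{i+1}) / (a_n + b_n - b_i)` for `0 ≤ i ≤ n-1`. -/
theorem Fcomp_zero_eq (X : ℕ → ℝ) (i n : ℕ) (hin : i < n) :
    Fcomp X i n 0 =
      (aRW X n + bRW X n - bRW X (i + 1)) / (aRW X n + bRW X n - bRW X i) :=
  Fcomp_zero_eq_of_le X hin.le
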